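/- For all m ∈ ℕ, n ≥ 1, k ∈ ℕ, the m-nested power sum satisfies S(m, n, k) = Σ_{i=0}^{k} C(n + m − 1, m + i) · μ(k, i). -/

import Mathlib

/-
The Saras triangle is the coefficient table of the binomial basis: induction on `k`, using
`μ(k+1, i) = i μ(k, i-1) + (i+1) μ(k, i)` and `(j+1) C(t+1, j+1) = (t+1) C(t, j)`, gives
`(t+1)^k = Σ_i C(t, i) μ(k, i)`, which is the case `m = 0`. Each further nesting sums over
`r = 1, …, n`, and the hockey-stick identity `Σ_{j<n} C(j+m, m+i) = C(n+m, m+i+1)` raises both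
indices of every binomial coefficient by one.
-/

open Finset Nat

def S : ℕ → ℕ → ℕ → ℕ
  | 0, n, k => n ^ k
  | m + 1, n, k => ∑ r ∈ Finset.Icc 1 n, S m r k

def saras : ℕ → ℕ → ℕ
  | _, 0 => 1
  | 0, _ + 1 => 0
  | k + 1, r + 1 =>
      if r + 1 ≤ k + 1 then (r + 1) * saras k r + (r + 2) * saras k (r + 1) else 0

lemma saras_zero_right (k : ℕ) : saras k 0 = 1 := by
  cases k <;> rfl

lemma saras_eq_zero_of_lt : ∀ {k r : ℕ}, k < r → saras k r = 0
  | 0, r + 1, _ => rfl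
  | k + 1, r + 1, h => by rw [saras, if_neg (by omega)]

lemma saras_succ_left (k i : ℕ) :
    saras (k + 1) i = i * saras k (i - 1) + (i + 1) * saras k i := by
  match i with
  | 0 => simp [saras_zero_right]
  | r + 1 =>
    rw [saras]
    split_ifs
    · simp
    · simp [saras_eq_zero_of_lt (show k < r by omega),
        saras_eq_zero_of_lt (show k < r + 1 by omega)]

theorem add_one_pow_eq_sum_choose_mul_saras (t k : ℕ) :
    (t + 1) ^ k = ∑ i ∈ range (k + 1), t.choose i * saras k i := by
  induction k with
  | zero => simp [saras_zero_right]
  | succ k ih =>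
    have lower : ∑ i ∈ range (k + 2), t.choose i * (i * saras k (i - 1)) =
        ∑ j ∈ range (k + 1), (j + 1) * t.choose (j + 1) * saras k j := by
      rw [sum_range_succ']
      simp only [add_tsub_cancel_right, zero_mul, mul_zero, add_zero]
      exact sum_congr rfl fun j _ => by ring
    have upper : ∑ i ∈ range (k + 2), t.choose i * ((i + 1) * saras k i) =
        ∑ j ∈ range (k + 1), (j + 1) * t.choose j * saras k j := by
      rw [sum_range_succ, saras_eq_zero_of_lt (lt_add_one k), mul_zero, mul_zero, add_zero]
      exact sum_congr rfl fun j _ => by ring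
    have pascal (j : ℕ) : (j + 1) * t.choose (j + 1) + (j + 1) * t.choose j =
        (t + 1) * t.choose j := by
      rw [add_one_mul_choose_eq, choose_succ_succ]
      ring
    calc (t + 1) ^ (k + 1)
        = ∑ j ∈ range (k + 1),
            ((j + 1) * t.choose (j + 1) + (j + 1) * t.choose j) * saras k j := by
          rw [pow_succ, ih, sum_mul]
          exact sum_congr rfl fun j _ => by rw [pascal]; ring
      _ = ∑ i ∈ range (k + 2), t.choose i * (i * saras k (i - 1)) +
            ∑ i ∈ range (k + 2), t.choose i * ((i + 1) * saras k i) := by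
          rw [lower, upper, ← sum_add_distrib]
          exact sum_congr rfl fun j _ => by ring
      _ = ∑ i ∈ range (k + 2), t.choose i * saras (k + 1) i := by
          rw [← sum_add_distrib]
          exact sum_congr rfl fun i _ => by rw [saras_succ_left, mul_add]

theorem sum_range_add_choose_add (n m c : ℕ) :
    ∑ j ∈ range n, (j + m).choose (m + c) = (n + m).choose (m + c + 1) := by
  induction n with
  | zero => simp [choose_eq_zero_of_lt (show m < m + c + 1 by omega)]
  | succ n ih =>
    rw [sum_range_succ, ih, add_right_comm n 1 m, choose_succ_succ', add_comm]

lemma S_succ_eq_sum_range (m n k : ℕ) : S (m + 1) n k = ∑ j ∈ range n, S m (j + 1) k := by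
  induction n with
  | zero => simp [S]
  | succ n ih =>
    rw [S] at ih ⊢
    rw [sum_Icc_succ_top (by omega), ih, sum_range_succ]

theorem S_add_one_eq_sum_choose_mul_saras (m t k : ℕ) :
    S m (t + 1) k = ∑ i ∈ range (k + 1), (t + m).choose (m + i) * saras k i := by
  induction m generalizing t with
  | zero => simp [S, add_one_pow_eq_sum_choose_mul_saras]
  | succ m ih =>
    rw [S_succ_eq_sum_range]
    simp only [ih, sum_comm (s := range (t + 1)), ← sum_mul, sum_range_add_choose_add]
    exact sum_congr rfl fun i _ => by congr 2 <;> omega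

theorem stmt6 (m n k : ℕ) (hn : 1 ≤ n) :
    S m n k = ∑ i ∈ Finset.range (k + 1), Nat.choose (n + m - 1) (m + i) * saras k i := by
  obtain ⟨t, rfl⟩ := exists_add_of_le hn
  rw [add_comm 1 t, S_add_one_eq_sum_choose_mul_saras, add_right_comm, add_tsub_cancel_right]
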